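/- Let M be an admissible matroid on J, S = S(M) the associated ranked symplectic matroid, and P(S) ⊆ ℝ^n its matroid polytope. Let B be a basis of M containing a pair {a, a*} such that B ∖ {a, a*} is admissible, let e_B ∈ ℝ^J be the 0/1-indicator vector of B, and let env : ℝ^J → ℝ^n be the linear map with (env x)_i = x_i − x_{i*}. Set F = cl_M(B ∖ {a, a*}). Then env(e_B) ∈ P(S) if and only if F ∪ F* ≠ J ∖ {a, a*}. -/

import Mathlib

/-!
Write `B' = B \ {a, a*}` and `F = cl B'`. Since `rank B = |B|` and `B` is not admissible, the rank
formula of an admissible matroid can only be attained at `I = B'` with the `+2` bonus, so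
`cl (B' ∪ {a})` and `cl (B' ∪ {a*})` are admissible; their intersection is `F`.

If some `b ∉ F ∪ F* ∪ {a, a*}` exists, exchanging `a*` for `b` and `a` for `b*` in `B` (or `a` for
`b` and `a*` for `b*`) gives two admissible bases whose signed vectors average to `e±_B`.
Otherwise `F ∪ F* = J \ {a, a*}`, and the functional `⟨e±_F, ·⟩` takes the value `|B'|` at `e±_B`
but at most `|B'| - 1` at every admissible basis `C`: `|F ∩ C| ≤ |B'|`, while `C` meets `F ∪ F*`
in at least `|C| - 1 = |B'| + 1` elements.
-/

open Set Matroid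
open scoped Matroid

open scoped Classical

/-- The ground set `J = [n] ⊔ [n]*`: `Sum.inl` is `[n]`, `Sum.inr` is `[n]*`. -/
abbrev J (n : ℕ) := Fin n ⊕ Fin n

/-- The fixed-point-free involution `a ↦ a*` on `J n`. -/
def sstar {n : ℕ} (a : J n) : J n := Sum.swap a

/-- `A* = {a* : a ∈ A}`. -/
def starSet {n : ℕ} (A : Set (J n)) : Set (J n) := sstar '' A

/-- `A` is admissible if `A ∩ A* = ∅`. -/
def Admissible {n : ℕ} (A : Set (J n)) : Prop := A ∩ starSet A = ∅

/-- `A` is totally inadmissible if `A* = A`. -/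
def TotallyInadmissible {n : ℕ} (A : Set (J n)) : Prop := starSet A = A

/-- The rank of a set in a matroid (on a finite ground type). -/
noncomputable def Matroid.rSet {α : Type*} (M : Matroid α) (A : Set α) : ℕ :=
  sSup {k : ℕ | ∃ I, M.Indep I ∧ I ⊆ A ∧ I.ncard = k}

/-- The rank of a matroid. -/
noncomputable def Matroid.rnk {α : Type*} (M : Matroid α) : ℕ := M.rSet M.E

/-- A loopless matroid: every singleton of the ground set is independent. -/
def Matroid.LooplessM {α : Type*} (M : Matroid α) : Prop := ∀ a ∈ M.E, M.Indep {a}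

/-- `I^ad M`: the independent sets of `M` whose closure is admissible. -/
def Iad {n : ℕ} (M : Matroid (J n)) : Set (Set (J n)) :=
  {I | M.Indep I ∧ Admissible (M.closure I)}

/-- An admissible matroid on `J n`. -/
def IsAdmissibleMatroid {n : ℕ} (M : Matroid (J n)) : Prop :=
  M.E = Set.univ ∧ M.LooplessM ∧
    ∀ A : Set (J n),
      M.rSet A = sSup {v : ℕ | ∃ I : Set (J n), M.Indep I ∧ Admissible I ∧ I ⊆ A ∧
        v = if ∃ a, a ∈ A ∧ sstar a ∈ A ∧ (I ∪ {a}) ∈ Iad M ∧ (I ∪ {sstar a}) ∈ Iad M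
            then I.ncard + 2 else I.ncard}

/-- Strongly admissible sets with respect to `M`. -/
inductive StronglyAdmissible {n : ℕ} (M : Matroid (J n)) : Set (J n) → Prop
  | empty : StronglyAdmissible M ∅
  | insert {B : Set (J n)} {a : J n} : StronglyAdmissible M B →
      a ∉ M.closure B → sstar a ∉ M.closure B → StronglyAdmissible M (Insert.insert a B)

/-- The Möbius function of a finite poset, valued in `ℤ`. -/
noncomputable def mob {α : Type*} [PartialOrder α] [Fintype α] (x y : α) : ℤ :=
  letI : DecidableEq α := Classical.decEq α
  letI : @DecidableRel α α (· < ·) := Classical.decRel _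
  letI : @DecidableRel α α (· ≤ ·) := Classical.decRel _
  letI := Fintype.toLocallyFiniteOrder (α := α)
  IncidenceAlgebra.mu ℤ x y

/-- The lattice of flats of the ranked symplectic matroid associated to `M`:
admissible flats of `M` together with the ground set as top element. -/
abbrev LS {n : ℕ} (M : Matroid (J n)) :=
  {F : Set (J n) // (M.IsFlat F ∧ Admissible F) ∨ F = M.E}

/-- The Möbius number `μ(S(M))` of the lattice of flats of the ranked symplectic matroid. -/
noncomputable def muS {n : ℕ} (M : Matroid (J n)) : ℤ :=
  if h : M.IsFlat ∅ ∧ Admissible (∅ : Set (J n)) then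
    mob (⟨∅, Or.inl h⟩ : LS M) ⟨M.E, Or.inr rfl⟩
  else 0

/-- The Möbius function of the lattice of flats of `M`. -/
noncomputable def muFlats {n : ℕ} (M : Matroid (J n)) (F G : Set (J n)) : ℤ :=
  if h : M.IsFlat F ∧ M.IsFlat G then
    mob (⟨F, h.1⟩ : {X : Set (J n) // M.IsFlat X}) ⟨G, h.2⟩
  else 0

/-- Matroid deletion. -/
def Matroid.del {α : Type*} (M : Matroid α) (D : Set α) : Matroid α := M ↾ (M.E \ D)

/-- Matroid contraction, via the dual. -/
def Matroid.con {α : Type*} (M : Matroid α) (C : Set α) : Matroid α := (M✶ ↾ (M✶.E \ C))✶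

/-- A circuit: a minimal dependent subset of the ground set. -/
def Matroid.Circuit' {α : Type*} (M : Matroid α) (C : Set α) : Prop :=
  C ⊆ M.E ∧ ¬ M.Indep C ∧ ∀ D, D ⊂ C → M.Indep D

/-- Connectedness of a matroid: nonempty ground set and any two elements lie
in a common circuit. -/
def Matroid.ConnectedM {α : Type*} (M : Matroid α) : Prop :=
  M.E.Nonempty ∧ ∀ a ∈ M.E, ∀ b ∈ M.E, a = b ∨ ∃ C, M.Circuit' C ∧ a ∈ C ∧ b ∈ C

/-- The 0/1-indicator vector of `B ⊆ J` in `ℝ^J`. -/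
noncomputable def indic {n : ℕ} (B : Set (J n)) : J n → ℝ := fun a => if a ∈ B then 1 else 0

/-- The enveloping map `env : ℝ^J → ℝ^n`, `(env x)_i = x_i - x_{i*}`. -/
def envMap {n : ℕ} (x : J n → ℝ) : Fin n → ℝ := fun i => x (Sum.inl i) - x (Sum.inr i)

/-- `e±_A ∈ ℝ^n`: `+1` on coordinates `i ∈ A`, `-1` on coordinates with `i* ∈ A`, `0` otherwise. -/
noncomputable def epm {n : ℕ} (A : Set (J n)) : Fin n → ℝ := envMap (indic A)

/-- The matroid polytope `P(S(M))` of the ranked symplectic matroid of `M`. -/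
noncomputable def PolyS {n : ℕ} (M : Matroid (J n)) : Set (Fin n → ℝ) :=
  convexHull ℝ (epm '' {B | M.IsBase B ∧ Admissible B})

/-- The support of the Bergman fan of the ranked symplectic matroid of `M`. -/
def Berg {n : ℕ} (M : Matroid (J n)) : Set (Fin n → ℝ) :=
  {ω | ∃ C : Finset (Set (J n)),
    (∀ F ∈ C, M.IsFlat F ∧ Admissible F ∧ F ≠ ∅) ∧
    (∀ F ∈ C, ∀ G ∈ C, F ⊆ G ∨ G ⊆ F) ∧
    ∃ a : Set (J n) → ℝ, (∀ F, 0 ≤ a F) ∧ ω = ∑ F ∈ C, a F • epm F}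

/-- A maximal chain `F₁ ⊊ ⋯ ⊊ F_d` of proper flats of the lattice of flats of `S(M)`,
where `rank_M (F i) = i + 1`. -/
def IsFlagChain {n : ℕ} (M : Matroid (J n)) (d : ℕ) (F : Fin d → Set (J n)) : Prop :=
  (∀ i, M.IsFlat (F i) ∧ Admissible (F i) ∧ M.rSet (F i) = (i : ℕ) + 1) ∧
    ∀ i j : Fin d, i < j → F i ⊂ F j

/-- A Minkowski weight of dimension `d` on the Bergman fan of `S(M)`. -/
def IsMinkowskiWeight {n : ℕ} (M : Matroid (J n)) (d : ℕ)
    (c : (Fin d → Set (J n)) → ℤ) : Prop :=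
  ∀ (σ : Fin d → Set (J n)) (k : Fin d), IsFlagChain M d σ →
    (∑ G ∈ Finset.univ.filter
        (fun G : Set (J n) => IsFlagChain M d (Function.update σ k G)),
        (c (Function.update σ k G) : ℝ) • epm G)
      ∈ Submodule.span ℝ {v : Fin n → ℝ | ∃ i : Fin d, i ≠ k ∧ v = epm (σ i)}

/-- The top (rank `d`) flat of a maximal chain. -/
def chainTop {n d : ℕ} (σ : Fin d → Set (J n)) : Set (J n) := ⋃ i, σ i

section Involution

variable {n : ℕ} {x : J n} {A : Set (J n)}

@[simp] lemma sstar_sstar (a : J n) : sstar (sstar a) = a := Sum.swap_swap a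

lemma sstar_involutive : Function.Involutive (sstar (n := n)) := sstar_sstar

lemma sstar_ne (a : J n) : sstar a ≠ a := by cases a <;> simp [sstar]

lemma sstar_eq_iff_eq_sstar {a b : J n} : sstar a = b ↔ a = sstar b :=
  sstar_involutive.eq_iff

lemma mem_starSet : x ∈ starSet A ↔ sstar x ∈ A :=
  Set.mem_image_iff_of_inverse sstar_involutive sstar_involutive

lemma admissible_iff : Admissible A ↔ ∀ x ∈ A, sstar x ∉ A := by
  simp [Admissible, Set.eq_empty_iff_forall_notMem, mem_starSet]

lemma Admissible.mono {A' : Set (J n)} (h : Admissible A) (hA' : A' ⊆ A) : Admissible A' :=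
  admissible_iff.2 fun x hx hsx => admissible_iff.1 h x (hA' hx) (hA' hsx)

lemma Admissible.insert (h : Admissible A) (hx : sstar x ∉ A) : Admissible (insert x A) := by
  rw [admissible_iff] at h ⊢
  rintro y (rfl | hy) (hsy | hsy)
  · exact sstar_ne y hsy
  · exact hx hsy
  · exact hx (by rwa [← hsy, sstar_sstar])
  · exact h y hy hsy

lemma Admissible.ncard_inter_pair_le_one (h : Admissible A) (a : J n) :
    (A ∩ {a, sstar a}).ncard ≤ 1 := by
  refine (Set.ncard_le_one (Set.toFinite _)).2 ?_
  rintro x ⟨hxA, rfl | rfl⟩ y ⟨hyA, rfl | rfl⟩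
  · rfl
  · exact absurd hyA (admissible_iff.1 h _ hxA)
  · exact absurd hxA (admissible_iff.1 h _ hyA)
  · rfl

end Involution

section SignedIndicator

variable {n : ℕ} {a x : J n} {S : Set (J n)}

lemma epm_insert (hx : x ∉ S) : epm (insert x S) = epm S + epm {x} := by
  funext i
  simp only [epm, envMap, indic, Pi.add_apply, Set.mem_insert_iff, Set.mem_singleton_iff]
  split_ifs <;> simp_all

lemma epm_sdiff_singleton (hx : x ∈ S) : epm (S \ {x}) = epm S - epm {x} := by
  rw [eq_sub_iff_add_eq, ← epm_insert (fun h => h.2 rfl), Set.insert_sdiff_singleton,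
    Set.insert_eq_of_mem hx]

lemma epm_sstar_singleton (x : J n) : epm {sstar x} = -epm {x} := by
  funext i
  cases x <;> simp [epm, envMap, indic, sstar, eq_comm]

lemma epm_sdiff_pair (ha : a ∈ S) (has : sstar a ∈ S) : epm (S \ {a, sstar a}) = epm S := by
  have has' : sstar a ∈ S \ {a} := Set.mem_sdiff_singleton.2 ⟨has, sstar_ne a⟩
  rw [Set.insert_eq, ← Set.sdiff_sdiff, epm_sdiff_singleton has', epm_sdiff_singleton ha,
    epm_sstar_singleton]
  abel

lemma sum_indic (S : Set (J n)) : ∑ e, indic S e = S.ncard := by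
  simp [indic, Finset.sum_boole, Set.ncard_eq_toFinset_card']

lemma epm_dotProduct_epm (S T : Set (J n)) :
    epm S ⬝ᵥ epm T = (S ∩ T).ncard - (starSet S ∩ T).ncard := by
  have hterm : ∀ i, epm S i * epm T i =
      (indic (S ∩ T) (.inl i) + indic (S ∩ T) (.inr i))
        - (indic (starSet S ∩ T) (.inl i) + indic (starSet S ∩ T) (.inr i)) := by
    intro i
    simp only [epm, envMap, indic, Set.mem_inter_iff, mem_starSet, sstar, Sum.swap_inl,
      Sum.swap_inr]
    split_ifs <;> simp_all
  rw [dotProduct, Finset.sum_congr rfl fun i _ => hterm i, Finset.sum_sub_distrib,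
    Finset.sum_add_distrib, Finset.sum_add_distrib, ← Fintype.sum_sum_type,
    ← Fintype.sum_sum_type, sum_indic, sum_indic]

end SignedIndicator

section Polytope

variable {n : ℕ} {M : Matroid (J n)} {v : Fin n → ℝ}

lemma epm_mem_polyS_of_isBase {B : Set (J n)} (hB : M.IsBase B) (hBad : Admissible B) :
    epm B ∈ PolyS M :=
  subset_convexHull ℝ _ ⟨B, ⟨hB, hBad⟩, rfl⟩

lemma mem_polyS_of_epm_add_epm {X Y : Set (J n)} (hX : M.IsBase X) (hXad : Admissible X)
    (hY : M.IsBase Y) (hYad : Admissible Y) (h : epm X + epm Y = v + v) : v ∈ PolyS M := by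
  have hv : v = (1 / 2 : ℝ) • epm X + (1 / 2 : ℝ) • epm Y := by
    funext i
    have := congrFun h i
    simp only [Pi.add_apply, Pi.smul_apply, smul_eq_mul] at this ⊢
    linarith
  rw [hv]
  exact convex_convexHull ℝ _ (epm_mem_polyS_of_isBase hX hXad)
    (epm_mem_polyS_of_isBase hY hYad) (by norm_num) (by norm_num) (by norm_num)

lemma polyS_subset_halfSpace {w : Fin n → ℝ} {c : ℝ}
    (h : ∀ C, M.IsBase C → Admissible C → w ⬝ᵥ epm C ≤ c) :
    PolyS M ⊆ {x | w ⬝ᵥ x ≤ c} :=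
  convexHull_min (by rintro _ ⟨C, ⟨hC, hCad⟩, rfl⟩; exact h C hC hCad)
    (convex_halfSpace_le ⟨dotProduct_add w, fun r x => dotProduct_smul r w x⟩ c)

end Polytope

section Sets

variable {α : Type*} {s : Set α} {a b : α}

lemma Set.insert_sdiff_pair (ha : a ∈ s) (hab : a ≠ b) : insert a (s \ {a, b}) = s \ {b} := by
  ext x
  by_cases hxa : x = a <;> simp_all

lemma Set.ncard_sdiff_pair_add_two [Finite α] (ha : a ∈ s) (hb : b ∈ s) (hab : a ≠ b) :
    (s \ {a, b}).ncard + 2 = s.ncard := by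
  have hsub : {a, b} ⊆ s := Set.insert_subset ha (Set.singleton_subset_iff.2 hb)
  rw [Set.ncard_sdiff hsub, Set.ncard_pair hab]
  have := Set.ncard_le_ncard hsub
  rw [Set.ncard_pair hab] at this
  omega

end Sets

section Matroid

variable {α : Type*} {M : Matroid α} {I X : Set α}

lemma Matroid.rSet_eq_ncard_of_indep [Finite α] (hI : M.Indep I) : M.rSet I = I.ncard := by
  have hub : ∀ k ∈ {k : ℕ | ∃ I', M.Indep I' ∧ I' ⊆ I ∧ I'.ncard = k},
      k ≤ I.ncard := by
    rintro k ⟨I', -, hI'I, rfl⟩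
    exact Set.ncard_le_ncard hI'I
  exact le_antisymm (csSup_le ⟨I.ncard, I, hI, subset_rfl, rfl⟩ hub)
    (le_csSup ⟨I.ncard, hub⟩ ⟨I, hI, subset_rfl, rfl⟩)

lemma Matroid.Indep.ncard_le_of_subset_closure (hI : M.Indep I) (hX : M.Indep X)
    (hXfin : X.Finite) (hIX : I ⊆ M.closure X) : I.ncard ≤ X.ncard := by
  have h := hI.encard_le_eRk_of_subset hIX
  rw [eRk_closure_eq, hX.eRk_eq_encard] at h
  have hIfin : I.Finite := Set.finite_of_encard_le_coe (h.trans_eq hXfin.cast_ncard_eq.symm)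
  rw [← hIfin.cast_ncard_eq, ← hXfin.cast_ncard_eq] at h
  exact_mod_cast h

lemma Matroid.Indep.closure_sdiff_inter_closure_sdiff (hI : M.Indep I) (a b : α) :
    M.closure (I \ {a}) ∩ M.closure (I \ {b}) = M.closure (I \ {a, b}) := by
  have hunion : M.Indep (I \ {a} ∪ I \ {b}) :=
    hI.subset (Set.union_subset Set.sdiff_subset Set.sdiff_subset)
  rw [← hunion.closure_inter_eq_inter_closure, Set.sdiff_inter_sdiff, Set.singleton_union]

end Matroid

namespace IsAdmissibleMatroid

variable {n : ℕ} {M : Matroid (J n)} {B : Set (J n)} {a : J n}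

lemma subset_ground (hM : IsAdmissibleMatroid M) (X : Set (J n)) : X ⊆ M.E :=
  hM.1 ▸ Set.subset_univ X

lemma exists_Iad_pair_of_not_admissible (hM : IsAdmissibleMatroid M) (hB : M.Indep B)
    (hBad : ¬ Admissible B) :
    ∃ I c, I ⊆ B ∧ Admissible I ∧ c ∈ B ∧ sstar c ∈ B ∧ insert c I ∈ Iad M ∧
      insert (sstar c) I ∈ Iad M ∧ I.ncard + 2 = B.ncard := by
  have mem_of_eq_sSup {S : Set ℕ} {k : ℕ} (h : k = sSup S) (hne : S.Nonempty)
      (hbdd : BddAbove S) : k ∈ S := h ▸ Nat.sSup_mem hne hbdd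
  have hmem := mem_of_eq_sSup ((M.rSet_eq_ncard_of_indep hB).symm.trans (hM.2.2 B))
    ⟨_, ∅, M.empty_indep, by simp [Admissible], Set.empty_subset B, rfl⟩
    ⟨B.ncard + 2, by
      rintro v ⟨I, -, -, hIB, rfl⟩
      have := Set.ncard_le_ncard hIB
      split_ifs <;> omega⟩
  obtain ⟨I, -, hIad, hIB, hI⟩ := hmem
  split_ifs at hI with hpair
  · obtain ⟨c, hc, hcs, hcI, hcsI⟩ := hpair
    rw [Set.union_singleton] at hcI hcsI
    exact ⟨I, c, hIB, hIad, hc, hcs, hcI, hcsI, hI.symm⟩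
  · exact absurd (Set.eq_of_subset_of_ncard_le hIB hI.le ▸ hIad) hBad

lemma admissible_closure_sdiff_sstar (hM : IsAdmissibleMatroid M) (hB : M.Indep B)
    (ha : a ∈ B) (has : sstar a ∈ B) : Admissible (M.closure (B \ {sstar a})) := by
  obtain ⟨I, c, hIB, hIad, hc, hcs, hcI, hcsI, hcard⟩ :=
    hM.exists_Iad_pair_of_not_admissible hB fun h => admissible_iff.1 h a ha has
  have hcI' : c ∉ I := fun h =>
    admissible_iff.1 (hcsI.2.mono (M.subset_closure _ (hM.subset_ground _)))
      (sstar c) (Set.mem_insert _ _) (Set.mem_insert_of_mem _ (by rwa [sstar_sstar]))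
  have hcsI' : sstar c ∉ I := fun h =>
    admissible_iff.1 (hcI.2.mono (M.subset_closure _ (hM.subset_ground _)))
      c (Set.mem_insert _ _) (Set.mem_insert_of_mem _ h)
  have hI : I = B \ {c, sstar c} := by
    refine Set.eq_of_subset_of_ncard_le (fun x hx => ⟨hIB hx, ?_⟩) ?_
    · rintro (rfl | rfl) <;> contradiction
    · have := Set.ncard_sdiff_pair_add_two hc hcs (sstar_ne c).symm
      omega
  have hac : a = c ∨ a = sstar c := by
    by_contra! hne
    have haI : a ∈ I := hI ▸ ⟨ha, by simp [hne.1, hne.2]⟩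
    have hasI : sstar a ∈ I := hI ▸ ⟨has, by simp [sstar_eq_iff_eq_sstar, hne.1, hne.2]⟩
    exact admissible_iff.1 hIad a haI hasI
  rcases hac with rfl | rfl
  · simpa [hI, Set.insert_sdiff_pair ha (sstar_ne a).symm] using hcI.2
  · rw [hI, Set.pair_comm, Set.insert_sdiff_pair hcs (sstar_ne c)] at hcsI
    simpa using hcsI.2

lemma admissible_closure_sdiff (hM : IsAdmissibleMatroid M) (hB : M.Indep B)
    (ha : a ∈ B) (has : sstar a ∈ B) : Admissible (M.closure (B \ {a})) := by
  simpa using hM.admissible_closure_sdiff_sstar hB has (by simpa using ha)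

lemma epm_notMem_polyS_of_closure_union_eq (hM : IsAdmissibleMatroid M) (hB : M.IsBase B)
    (ha : a ∈ B) (has : sstar a ∈ B)
    (hcover : M.closure (B \ {a, sstar a}) ∪ starSet (M.closure (B \ {a, sstar a})) =
      Set.univ \ {a, sstar a}) :
    epm B ∉ PolyS M := by
  set B' := B \ {a, sstar a}
  set F := M.closure B'
  have hB'F : B' ⊆ F := M.subset_closure B' (hM.subset_ground _)
  have hFad : Admissible F := (hM.admissible_closure_sdiff_sstar hB.indep ha has).mono
    (M.closure_subset_closure (Set.sdiff_subset_sdiff_right (Set.subset_insert _ _)))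
  have hbound : ∀ C, M.IsBase C → Admissible C → epm F ⬝ᵥ epm C ≤ B'.ncard - 1 := by
    intro C hC hCad
    have hFC : (F ∩ C).ncard ≤ B'.ncard :=
      (hC.indep.subset Set.inter_subset_right).ncard_le_of_subset_closure
        (hB.indep.subset Set.sdiff_subset) (Set.toFinite _) Set.inter_subset_left
    have hC_sub : C ⊆ (F ∩ C ∪ starSet F ∩ C) ∪ C ∩ {a, sstar a} := by
      intro x hx
      by_cases hxa : x ∈ ({a, sstar a} : Set (J n))
      · exact Or.inr ⟨hx, hxa⟩
      · have : x ∈ F ∪ starSet F := hcover ▸ ⟨Set.mem_univ x, hxa⟩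
        rcases this with h | h
        exacts [Or.inl (Or.inl ⟨h, hx⟩), Or.inl (Or.inr ⟨h, hx⟩)]
    have hCcard : C.ncard ≤ (F ∩ C).ncard + (starSet F ∩ C).ncard + 1 :=
      calc C.ncard ≤ (F ∩ C ∪ starSet F ∩ C).ncard + (C ∩ {a, sstar a}).ncard :=
            (Set.ncard_le_ncard hC_sub).trans (Set.ncard_union_le _ _)
        _ ≤ _ := add_le_add (Set.ncard_union_le _ _) (hCad.ncard_inter_pair_le_one a)
    have hCB : C.ncard = B'.ncard + 2 := by
      rw [hC.ncard_eq_ncard_of_isBase hB, Set.ncard_sdiff_pair_add_two ha has (sstar_ne a).symm]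
    rw [epm_dotProduct_epm]
    have h1 : ((F ∩ C).ncard : ℝ) ≤ B'.ncard := by exact_mod_cast hFC
    have h2 : (C.ncard : ℝ) ≤ (F ∩ C).ncard + (starSet F ∩ C).ncard + 1 := by
      exact_mod_cast hCcard
    have h3 : (C.ncard : ℝ) = B'.ncard + 2 := by exact_mod_cast hCB
    linarith
  have hvalue : epm F ⬝ᵥ epm B = B'.ncard := by
    have hstar : starSet F ∩ B' = ∅ :=
      Set.subset_eq_empty (Set.inter_subset_inter_right _ hB'F)
        (by rw [Set.inter_comm]; exact hFad)
    rw [← epm_sdiff_pair ha has, epm_dotProduct_epm, Set.inter_eq_right.2 hB'F, hstar,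
      Set.ncard_empty, Nat.cast_zero, sub_zero]
  intro hmem
  have : epm F ⬝ᵥ epm B ≤ B'.ncard - 1 := polyS_subset_halfSpace hbound hmem
  linarith

lemma epm_mem_polyS_of_exchange (hM : IsAdmissibleMatroid M) (hB : M.IsBase B) {b : J n}
    (ha : a ∈ B) (has : sstar a ∈ B) (hb : b ∉ B) (hbs : sstar b ∉ B)
    (hbK : b ∉ M.closure (B \ {sstar a})) (hbL : sstar b ∉ M.closure (B \ {a})) :
    epm B ∈ PolyS M := by
  have hX := hB.exchange_base_of_notMem_closure has hbK (hM.subset_ground _ (Set.mem_univ b))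
  have hY := hB.exchange_base_of_notMem_closure ha hbL (hM.subset_ground _ (Set.mem_univ _))
  have hXad : Admissible (insert b (B \ {sstar a})) :=
    ((hM.admissible_closure_sdiff_sstar hB.indep ha has).mono
      (M.subset_closure _ (hM.subset_ground _))).insert fun h => hbs h.1
  have hYad : Admissible (insert (sstar b) (B \ {a})) :=
    ((hM.admissible_closure_sdiff hB.indep ha has).mono
      (M.subset_closure _ (hM.subset_ground _))).insert fun h => hb (by simpa using h.1)
  refine mem_polyS_of_epm_add_epm hX hXad hY hYad ?_
  rw [epm_insert fun h => hb h.1, epm_insert fun h => hbs h.1, epm_sdiff_singleton has,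
    epm_sdiff_singleton ha, epm_sstar_singleton, epm_sstar_singleton]
  abel

lemma epm_mem_polyS_of_closure_union_ne (hM : IsAdmissibleMatroid M) (hB : M.IsBase B)
    (ha : a ∈ B) (has : sstar a ∈ B)
    (hcover : M.closure (B \ {a, sstar a}) ∪ starSet (M.closure (B \ {a, sstar a})) ≠
      Set.univ \ {a, sstar a}) :
    epm B ∈ PolyS M := by
  set F := M.closure (B \ {a, sstar a})
  set K := M.closure (B \ {sstar a})
  set L := M.closure (B \ {a})
  have hKad : Admissible K := hM.admissible_closure_sdiff_sstar hB.indep ha has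
  have hLad : Admissible L := hM.admissible_closure_sdiff hB.indep ha has
  have hKL : K ∩ L = F := by
    rw [hB.indep.closure_sdiff_inter_closure_sdiff, Set.pair_comm]
  have haF : a ∉ F := fun h => hB.indep.notMem_closure_sdiff_of_mem ha (hKL ▸ h).2
  have hasF : sstar a ∉ F := fun h => hB.indep.notMem_closure_sdiff_of_mem has (hKL ▸ h).1
  have hsub : F ∪ starSet F ⊆ Set.univ \ {a, sstar a} := by
    rintro x hx
    refine ⟨Set.mem_univ x, ?_⟩
    rcases hx with hx | hx <;> rintro (rfl | rfl)
    exacts [haF hx, hasF hx, hasF (mem_starSet.1 hx), haF (by simpa [mem_starSet] using hx)]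
  obtain ⟨b, ⟨-, hbaa⟩, hbF⟩ := Set.exists_of_ssubset (ssubset_of_subset_of_ne hsub hcover)
  have hBF : B ⊆ {a, sstar a} ∪ F :=
    Set.sdiff_subset_iff.1 (M.subset_closure _ (hM.subset_ground _))
  have hb : b ∉ B := fun h => by
    rcases hBF h with h | h
    exacts [hbaa h, hbF (Or.inl h)]
  have hbs : sstar b ∉ B := fun h => by
    rcases hBF h with h | h
    · exact hbaa (by rcases h with h | h <;> simp_all [sstar_eq_iff_eq_sstar])
    · exact hbF (Or.inr (mem_starSet.2 h))
  -- `b ∉ K ∩ L` and `K`, `L` are admissible, so one of the two exchanges is available.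
  by_cases hbK : b ∈ K
  · refine hM.epm_mem_polyS_of_exchange hB has (by simpa using ha) hb hbs ?_ ?_
    · exact fun hbL => hbF (Or.inl (hKL ▸ ⟨hbK, by simpa using hbL⟩))
    · exact fun h => admissible_iff.1 hKad b hbK (by simpa using h)
  by_cases hbL : sstar b ∈ L
  · refine hM.epm_mem_polyS_of_exchange hB has (by simpa using ha) hb hbs ?_ ?_
    · exact fun h => admissible_iff.1 hLad _ hbL (by simpa using h)
    · exact fun h => hbF (Or.inr (mem_starSet.2 (hKL ▸ ⟨by simpa using h, hbL⟩)))
  exact hM.epm_mem_polyS_of_exchange hB ha has hb hbs hbK hbL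

end IsAdmissibleMatroid

theorem stmt_10_general (n : ℕ) (M : Matroid (J n)) (hM : IsAdmissibleMatroid M)
    (B : Set (J n)) (hB : M.IsBase B) (a : J n) (ha : a ∈ B) (has : sstar a ∈ B) :
    envMap (indic B) ∈ PolyS M ↔
      M.closure (B \ {a, sstar a}) ∪ starSet (M.closure (B \ {a, sstar a})) ≠
        Set.univ \ {a, sstar a} :=
  ⟨fun hmem hcover => hM.epm_notMem_polyS_of_closure_union_eq hB ha has hcover hmem,
    hM.epm_mem_polyS_of_closure_union_ne hB ha has⟩

theorem stmt_10 (n : ℕ) (hn : 1 ≤ n) (M : Matroid (J n)) (hM : IsAdmissibleMatroid M)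
    (B : Set (J n)) (hB : M.IsBase B) (a : J n) (ha : a ∈ B) (has : sstar a ∈ B)
    (hadm : Admissible (B \ {a, sstar a})) :
    envMap (indic B) ∈ PolyS M ↔
      M.closure (B \ {a, sstar a}) ∪ starSet (M.closure (B \ {a, sstar a})) ≠
        Set.univ \ {a, sstar a} :=
  stmt_10_general n M hM B hB a ha has
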